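/- arXiv:1203.1432 — 2 statements merged into one kernel-verified Lean document; each statement's English description precedes it below -/
import Mathlib

section
/- Let X be a Busemann space, C ⊆ X nonempty, and T:C→C λ-firmly nonexpansive for some λ ∈ (0,1). Then any periodic point of T is a fixed point of T: if T^{m+1}x = x for some m ≥ 0, then Tx = x. -/
open Metric Set

/-- A geodesic segment in a metric space joining `x` and `y`: the image of an
isometric embedding of a real interval sending the endpoints to `x` and `y`. -/
def IsGeodesicSegment {X : Type*} [MetricSpace X] (S : Set X) (x y : X) : Prop :=
  ∃ (a b : ℝ) (γ : ℝ → X), a ≤ b ∧ γ a = x ∧ γ b = y ∧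
    (∀ s ∈ Set.Icc a b, ∀ t ∈ Set.Icc a b, dist (γ s) (γ t) = |s - t|) ∧
    S = γ '' Set.Icc a b

/-- A metric space is geodesic if every two points are joined by a geodesic segment. -/
def GeodesicSpace (X : Type*) [MetricSpace X] : Prop :=
  ∀ x y : X, ∃ S : Set X, IsGeodesicSegment S x y

/-- `(X,d,W)` is a W-hyperbolic space: the convexity mapping `W` satisfies
axioms (W1)-(W4) for all parameters in `[0,1]`. -/
def IsWHyperbolic {X : Type*} [MetricSpace X] (W : X → X → ℝ → X) : Prop :=
  (∀ x y z : X, ∀ l ∈ Set.Icc (0:ℝ) 1,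
      dist z (W x y l) ≤ (1 - l) * dist z x + l * dist z y) ∧
  (∀ x y : X, ∀ l ∈ Set.Icc (0:ℝ) 1, ∀ l' ∈ Set.Icc (0:ℝ) 1,
      dist (W x y l) (W x y l') = |l - l'| * dist x y) ∧
  (∀ x y : X, ∀ l ∈ Set.Icc (0:ℝ) 1, W x y l = W y x (1 - l)) ∧
  (∀ x y z w : X, ∀ l ∈ Set.Icc (0:ℝ) 1,
      dist (W x z l) (W y w l) ≤ (1 - l) * dist x y + l * dist z w)

/-- An affinely reparametrized geodesic on `[a,b]`: a constant path or a geodesic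
precomposed with an affine homeomorphism, i.e. `d(γ s, γ t) = c|s-t|` for some `c ≥ 0`. -/
def AffinelyReparamGeodesic {X : Type*} [MetricSpace X] (γ : ℝ → X) (a b : ℝ) : Prop :=
  ∃ c : ℝ, 0 ≤ c ∧ ∀ s ∈ Set.Icc a b, ∀ t ∈ Set.Icc a b, dist (γ s) (γ t) = c * |s - t|

/-- A Busemann space: a geodesic space in which the distance between any two
affinely reparametrized geodesics is a convex function. -/
def IsBusemann (X : Type*) [MetricSpace X] : Prop :=
  GeodesicSpace X ∧
  ∀ (γ γ' : ℝ → X) (a b c d : ℝ), AffinelyReparamGeodesic γ a b →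
    AffinelyReparamGeodesic γ' c d →
    ConvexOn ℝ (Set.Icc a b ×ˢ Set.Icc c d) (fun p : ℝ × ℝ => dist (γ p.1) (γ' p.2))

/-!
Along a periodic orbit `x, Tx, T²x, …` the displacement `d(Tⁱx, Tⁱ⁺¹x)` is nonincreasing (by (W4)
and firm nonexpansiveness), hence constant, equal to `D = d(x, Tx)`. The points
`wᵢ = W(Tⁱx, Tⁱ⁺¹x, λ)` then satisfy `d(wᵢ, wᵢ₊₁) = D` as well, so the zigzag
`x, w₀, Tx, w₁, T²x, …` has every consecutive triple on a geodesic. By the betweenness property of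
Busemann spaces the whole zigzag is a geodesic, so `d(x, Tⁿx) = nD`; for `n` a period this forces
`D = 0`.
-/

section

open Function

variable {X : Type*} [MetricSpace X]

def IsGeodesicOn (γ : ℝ → X) (a b : ℝ) : Prop :=
  ∀ s ∈ Icc a b, ∀ t ∈ Icc a b, dist (γ s) (γ t) = |s - t|

namespace IsGeodesicOn

variable {γ : ℝ → X} {a b : ℝ}

lemma of_le (h : ∀ s ∈ Icc a b, ∀ t ∈ Icc a b, s ≤ t → dist (γ s) (γ t) = t - s) :
    IsGeodesicOn γ a b := by
  intro s hs t ht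
  rcases le_total s t with hst | hts
  · rw [h s hs t ht hst, abs_of_nonpos (sub_nonpos.2 hst), neg_sub]
  · rw [dist_comm, h t ht s hs hts, abs_of_nonneg (sub_nonneg.2 hts)]

lemma dist_eq (hγ : IsGeodesicOn γ a b) {s t : ℝ} (hs : s ∈ Icc a b) (ht : t ∈ Icc a b)
    (hst : s ≤ t) : dist (γ s) (γ t) = t - s := by
  rw [hγ s hs t ht, abs_of_nonpos (sub_nonpos.2 hst), neg_sub]

lemma affinelyReparamGeodesic (hγ : IsGeodesicOn γ a b) : AffinelyReparamGeodesic γ a b :=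
  ⟨1, zero_le_one, fun s hs t ht => (one_mul |s - t|).symm ▸ hγ s hs t ht⟩

lemma piecewise {γ₁ γ₂ : ℝ → X} {a b c : ℝ} (h₁ : IsGeodesicOn γ₁ a b)
    (h₂ : IsGeodesicOn γ₂ b c) (hb : γ₁ b = γ₂ b) (hac : dist (γ₁ a) (γ₂ c) = c - a) :
    IsGeodesicOn (fun t => if t ≤ b then γ₁ t else γ₂ t) a c := by
  refine of_le fun s hs t ht hst => ?_
  rcases le_or_gt t b with htb | hbt
  · simp only [if_pos htb, if_pos (hst.trans htb)]
    exact h₁.dist_eq ⟨hs.1, hst.trans htb⟩ ⟨hs.1.trans hst, htb⟩ hst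
  rcases le_or_gt s b with hsb | hbs
  · simp only [if_pos hsb, if_neg hbt.not_ge]
    have hs₁ : s ∈ Icc a b := ⟨hs.1, hsb⟩
    have ht₂ : t ∈ Icc b c := ⟨hbt.le, ht.2⟩
    have hb₁ : b ∈ Icc a b := ⟨hs.1.trans hsb, le_rfl⟩
    have hb₂ : b ∈ Icc b c := ⟨le_rfl, hbt.le.trans ht.2⟩
    apply le_antisymm
    · calc dist (γ₁ s) (γ₂ t) ≤ dist (γ₁ s) (γ₁ b) + dist (γ₁ b) (γ₂ t) := dist_triangle _ _ _
        _ = t - s := by rw [h₁.dist_eq hs₁ hb₁ hsb, hb, h₂.dist_eq hb₂ ht₂ hbt.le]; ring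
    · have := dist_triangle4 (γ₁ a) (γ₁ s) (γ₂ t) (γ₂ c)
      rw [hac, h₁.dist_eq ⟨le_rfl, hb₁.1⟩ hs₁ hs.1, h₂.dist_eq ht₂ ⟨hb₂.2, le_rfl⟩ ht.2] at this
      linarith
  · simp only [if_neg hbs.not_ge, if_neg hbt.not_ge]
    exact h₂.dist_eq ⟨hbs.le, hs.2⟩ ⟨hbs.le.trans hst, ht.2⟩ hst

end IsGeodesicOn

namespace GeodesicSpace

lemma exists_isGeodesicOn (hG : GeodesicSpace X) (x y : X) (a : ℝ) :
    ∃ γ : ℝ → X, γ a = x ∧ γ (a + dist x y) = y ∧ IsGeodesicOn γ a (a + dist x y) := by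
  obtain ⟨-, a', b', γ, hab, hx, hy, hγ, -⟩ := hG x y
  have hlen : dist x y = b' - a' := by
    rw [← hx, ← hy, hγ a' ⟨le_rfl, hab⟩ b' ⟨hab, le_rfl⟩, abs_sub_comm,
      abs_of_nonneg (sub_nonneg.2 hab)]
  refine ⟨fun t => γ (t - a + a'), by simpa using hx, by simpa [hlen] using hy, ?_⟩
  intro s hs t ht
  rw [hγ (s - a + a') ⟨by linarith [hs.1], by linarith [hs.2]⟩
    (t - a + a') ⟨by linarith [ht.1], by linarith [ht.2]⟩]
  ring_nf

lemma exists_isGeodesicOn_through (hG : GeodesicSpace X) {x y z : X}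
    (h : dist x y + dist y z = dist x z) :
    ∃ γ : ℝ → X, γ 0 = x ∧ γ (dist x y) = y ∧ γ (dist x z) = z ∧
      IsGeodesicOn γ 0 (dist x z) := by
  obtain ⟨γ₁, h₁x, h₁y, h₁⟩ := hG.exists_isGeodesicOn x y 0
  obtain ⟨γ₂, h₂y, h₂z, h₂⟩ := hG.exists_isGeodesicOn y z (dist x y)
  rw [zero_add] at h₁y h₁
  rw [h] at h₂z h₂
  refine ⟨fun t => if t ≤ dist x y then γ₁ t else γ₂ t, by simp [h₁x], by simp [h₁y], ?_,
    h₁.piecewise h₂ (h₁y.trans h₂y.symm) (by rw [h₁x, h₂z, sub_zero])⟩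
  dsimp only
  split_ifs with hle
  · have hyz : y = z := dist_le_zero.1 (by linarith)
    rw [show dist x z = dist x y by linarith [dist_nonneg (x := y) (y := z)], h₁y, hyz]
  · exact h₂z

end GeodesicSpace

namespace IsBusemann

lemma convexOn_dist (hB : IsBusemann X) (p : X) {γ : ℝ → X} {a b : ℝ}
    (hγ : IsGeodesicOn γ a b) :
    ConvexOn ℝ (Icc a b) (fun t => dist p (γ t)) := by
  have hconv := hB.2 (fun _ => p) γ 0 0 a b ⟨0, le_rfl, fun s _ t _ => by simp⟩
    hγ.affinelyReparamGeodesic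
  refine ⟨convex_Icc a b, fun s hs t ht μ ν hμ hν hμν => ?_⟩
  simpa using hconv.2 (x := (0, s)) (y := (0, t)) ⟨left_mem_Icc.2 le_rfl, hs⟩
    ⟨left_mem_Icc.2 le_rfl, ht⟩ hμ hν hμν

lemma betweenness (hB : IsBusemann X) {a b c d : X} (habc : dist a b + dist b c = dist a c)
    (hbcd : dist b c + dist c d = dist b d) (hbc : b ≠ c) :
    dist a d = dist a b + dist b c + dist c d := by
  obtain ⟨γ, hb, hc, hd, hγ⟩ := hB.1.exists_isGeodesicOn_through hbcd
  have hbc₀ : 0 < dist b c := dist_pos.2 hbc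
  have hcd₀ : 0 ≤ dist c d := dist_nonneg
  have hbd₀ : 0 < dist b d := by linarith
  -- the convex `t ↦ d(a, γ t)` has slope `1` on `[0, d(b,c)]`, hence `≥ 1` on `[0, d(b,d)]`
  have hslope := (hB.convexOn_dist a hγ).secant_mono (left_mem_Icc.2 hbd₀.le)
    ⟨hbc₀.le, by linarith⟩ (right_mem_Icc.2 hbd₀.le) hbc₀.ne' hbd₀.ne' (by linarith)
  simp only [hb, hc, hd, sub_zero, ← habc, add_sub_cancel_left, div_self hbc₀.ne',
    one_le_div hbd₀] at hslope
  linarith [dist_triangle a c d]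

lemma dist_eq_of_zigzag (hB : IsBusemann X) {y w : ℕ → X} {a b : ℝ} (ha : 0 < a) (hb : 0 < b)
    (hyw : ∀ i, dist (y i) (w i) = a) (hwy : ∀ i, dist (w i) (y (i + 1)) = b)
    (hyy : ∀ i, dist (y i) (y (i + 1)) = a + b) (hww : ∀ i, dist (w i) (w (i + 1)) = b + a)
    (n : ℕ) : dist (y 0) (y n) = n * (a + b) := by
  suffices h : ∀ n : ℕ, dist (y 0) (y n) = n * (a + b) ∧ dist (y 0) (w n) = n * (a + b) + a from
    (h n).1
  intro n
  induction n with
  | zero => simp [hyw]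
  | succ n ih =>
    have hy := hB.betweenness (a := y 0) (d := y (n + 1)) (by rw [ih.1, hyw, ih.2])
      (by rw [hyw, hwy, hyy]) (dist_pos.1 ((hyw n).symm ▸ ha))
    have hw := hB.betweenness (a := y 0) (d := w (n + 1))
      (by rw [ih.2, hwy, hy, ih.1, hyw, hwy]) (by rw [hwy, hyw, hww])
      (dist_pos.1 ((hwy n).symm ▸ hb))
    rw [hw, hy, ih.1, ih.2, hyw, hwy, hyw]
    push_cast
    constructor <;> ring

end IsBusemann

namespace IsWHyperbolic

variable {W : X → X → ℝ → X} {l : ℝ}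

lemma apply_zero (hW : IsWHyperbolic W) (x y : X) : W x y 0 = x :=
  (dist_le_zero.1 (by simpa using hW.1 x y x 0 ⟨le_rfl, zero_le_one⟩)).symm

lemma apply_one (hW : IsWHyperbolic W) (x y : X) : W x y 1 = y :=
  (dist_le_zero.1 (by simpa using hW.1 x y y 1 ⟨zero_le_one, le_rfl⟩)).symm

lemma dist_left_apply (hW : IsWHyperbolic W) (x y : X) (hl : l ∈ Icc (0 : ℝ) 1) :
    dist x (W x y l) = l * dist x y := by
  have := hW.2.1 x y 0 ⟨le_rfl, zero_le_one⟩ l hl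
  rwa [hW.apply_zero, zero_sub, abs_neg, abs_of_nonneg hl.1] at this

lemma dist_apply_right (hW : IsWHyperbolic W) (x y : X) (hl : l ∈ Icc (0 : ℝ) 1) :
    dist (W x y l) y = (1 - l) * dist x y := by
  have := hW.2.1 x y l hl 1 ⟨zero_le_one, le_rfl⟩
  rwa [hW.apply_one, abs_sub_comm, abs_of_nonneg (sub_nonneg.2 hl.2)] at this

end IsWHyperbolic

/-- `W x y λ` plays the role of `(1 - λ) x ⊕ λ y`. -/
def IsFirmlyNonexpansive (W : X → X → ℝ → X) (l : ℝ) (C : Set X) (T : X → X) : Prop :=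
  ∀ x ∈ C, ∀ y ∈ C, dist (T x) (T y) ≤ dist (W x (T x) l) (W y (T y) l)

namespace IsFirmlyNonexpansive

variable {W : X → X → ℝ → X} {l : ℝ} {C : Set X} {T : X → X} {x : X}

lemma dist_apply_apply_le (hW : IsWHyperbolic W) (hT : IsFirmlyNonexpansive W l C T)
    (hTC : MapsTo T C C) (hl : l ∈ Ico (0 : ℝ) 1) (hx : x ∈ C) :
    dist (T x) (T (T x)) ≤ dist x (T x) := by
  have h := (hT x hx (T x) (hTC hx)).trans
    (hW.2.2.2 x (T x) (T x) (T (T x)) l ⟨hl.1, hl.2.le⟩)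
  nlinarith [h, hl.2]

lemma dist_iterate_succ_eq_of_isPeriodicPt (hW : IsWHyperbolic W)
    (hT : IsFirmlyNonexpansive W l C T) (hTC : MapsTo T C C) (hl : l ∈ Ico (0 : ℝ) 1)
    (hx : x ∈ C) {n : ℕ} (hper : IsPeriodicPt T n x) (hn : 0 < n) (i : ℕ) :
    dist (T^[i] x) (T (T^[i] x)) = dist x (T x) := by
  set δ : ℕ → ℝ := fun i => dist (T^[i] x) (T (T^[i] x))
  have hδ : Antitone δ := antitone_nat_of_succ_le fun i => by
    simpa only [δ, iterate_succ_apply'] using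
      hT.dist_apply_apply_le hW hTC hl (hTC.iterate i hx)
  have hδ₀ : ∀ k, δ (k * n) = δ 0 := fun k => by
    simp only [δ, (hper.const_mul k).eq, iterate_zero_apply]
  refine le_antisymm (hδ (Nat.zero_le i)) ?_
  calc δ 0 = δ (i * n) := (hδ₀ i).symm
    _ ≤ δ i := hδ (Nat.le_mul_of_pos_right i hn)

lemma dist_W_W_eq (hW : IsWHyperbolic W) (hT : IsFirmlyNonexpansive W l C T)
    (hTC : MapsTo T C C) (hl : l ∈ Icc (0 : ℝ) 1) (hx : x ∈ C)
    (hD : dist (T x) (T (T x)) = dist x (T x)) :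
    dist (W x (T x) l) (W (T x) (T (T x)) l) = dist x (T x) := by
  refine le_antisymm ?_ (hD ▸ hT x hx (T x) (hTC hx))
  calc _ ≤ dist (W x (T x) l) (T x) + dist (T x) (W (T x) (T (T x)) l) := dist_triangle _ _ _
    _ = dist x (T x) := by rw [hW.dist_apply_right _ _ hl, hW.dist_left_apply _ _ hl, hD]; ring

lemma dist_iterate_eq (hB : IsBusemann X) (hW : IsWHyperbolic W)
    (hT : IsFirmlyNonexpansive W l C T) (hTC : MapsTo T C C) (hl : l ∈ Ioo (0 : ℝ) 1)
    (hx : x ∈ C) (hD : ∀ i, dist (T^[i] x) (T (T^[i] x)) = dist x (T x)) (n : ℕ) :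
    dist x (T^[n] x) = n * dist x (T x) := by
  by_cases hTx : T x = x
  · rw [iterate_fixed hTx, hTx, dist_self, mul_zero]
  have hD₀ : 0 < dist x (T x) := dist_pos.2 (Ne.symm hTx)
  have hl' : l ∈ Icc (0 : ℝ) 1 := Ioo_subset_Icc_self hl
  have hy : ∀ i, T^[i + 1] x = T (T^[i] x) := fun i => iterate_succ_apply' T i x
  have hD' : ∀ i, dist (T (T^[i] x)) (T (T (T^[i] x))) = dist (T^[i] x) (T (T^[i] x)) :=
    fun i => by rw [hD i, ← hD (i + 1), hy]
  have := hB.dist_eq_of_zigzag (y := fun i => T^[i] x)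
    (w := fun i => W (T^[i] x) (T^[i + 1] x) l)
    (mul_pos hl.1 hD₀) (mul_pos (sub_pos.2 hl.2) hD₀)
    (fun i => by rw [hW.dist_left_apply _ _ hl', hy, hD])
    (fun i => by rw [hW.dist_apply_right _ _ hl', hy, hD])
    (fun i => by rw [hy, hD]; ring)
    (fun i => by
      rw [hy, hy (i + 1), hy, hT.dist_W_W_eq hW hTC hl' (hTC.iterate i hx) (hD' i), hD]; ring)
    n
  rw [iterate_zero_apply] at this
  rw [this]
  ring

end IsFirmlyNonexpansive

end

theorem stmt14_general {X : Type*} [MetricSpace X]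
    (hBus : IsBusemann X) (W : X → X → ℝ → X) (hW : IsWHyperbolic W)
    (C : Set X)
    (T : X → X) (hTC : Set.MapsTo T C C)
    (l : ℝ) (hl : l ∈ Set.Ioo (0:ℝ) 1)
    (hT : ∀ x ∈ C, ∀ y ∈ C, dist (T x) (T y) ≤ dist (W x (T x) l) (W y (T y) l)) :
    ∀ x ∈ C, ∀ m : ℕ, T^[m + 1] x = x → T x = x := by
  intro x hx m hper
  have hD := IsFirmlyNonexpansive.dist_iterate_succ_eq_of_isPeriodicPt hW hT hTC
    (Ioo_subset_Ico_self hl) hx hper m.succ_pos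
  have hdist := IsFirmlyNonexpansive.dist_iterate_eq hBus hW hT hTC hl hx hD (m + 1)
  rw [hper, dist_self, eq_comm, mul_eq_zero, dist_eq_zero] at hdist
  exact (hdist.resolve_left (by positivity)).symm

theorem stmt14 {X : Type*} [MetricSpace X]
    (hBus : IsBusemann X) (W : X → X → ℝ → X) (hW : IsWHyperbolic W)
    (C : Set X) (hne : C.Nonempty)
    (T : X → X) (hTC : Set.MapsTo T C C)
    (l : ℝ) (hl : l ∈ Set.Ioo (0:ℝ) 1)
    (hT : ∀ x ∈ C, ∀ y ∈ C, dist (T x) (T y) ≤ dist (W x (T x) l) (W y (T y) l)) :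
    ∀ x ∈ C, ∀ m : ℕ, T^[m + 1] x = x → T x = x :=
  stmt14_general hBus W hW C T hTC l hl hT
end

section
/- Let b > 0, λ ∈ (0,1), and (X,d,W,η) be a UCW-hyperbolic space with monotone modulus of uniform convexity η. Let C ⊆ X be nonempty, T:C→C λ-firmly nonexpansive, and x ∈ C such that for every δ > 0 there exists y ∈ C with d(x,y) ≤ b and d(y,Ty) < δ. Then for every ε ∈ (0,2b) and every n ≥ Φ(ε) := ⌈(b+1)/(ε·λ·(1-λ)·η(b+1, ε/(b+1)))⌉, it holds that d(T^n x, T^{n+1} x) ≤ ε; moreover d(T^n x, T^{n+1} x) ≤ ε trivially for all n when ε ≥ 2b. -/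
open Metric Set

/-- `η` is a monotone modulus of uniform convexity for `(X,d,W)`:
it witnesses uniform convexity and decreases in `r` for fixed `ε`. -/
def IsMonotoneModulus {X : Type*} [MetricSpace X] (W : X → X → ℝ → X)
    (η : ℝ → ℝ → ℝ) : Prop :=
  (∀ r > (0:ℝ), ∀ ε ∈ Set.Ioc (0:ℝ) 2, η r ε ∈ Set.Ioc (0:ℝ) 1 ∧
    ∀ a x y : X, dist x a ≤ r → dist y a ≤ r → ε * r ≤ dist x y →
      dist (W x y (1/2)) a ≤ (1 - η r ε) * r) ∧
  (∀ ε ∈ Set.Ioc (0:ℝ) 2, ∀ r s : ℝ, 0 < r → r ≤ s → η s ε ≤ η r ε)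

/-- A subset is convex if it contains the segments of its points. -/
def IsWConvex {X : Type*} [MetricSpace X] (W : X → X → ℝ → X) (C : Set X) : Prop :=
  ∀ x ∈ C, ∀ y ∈ C, ∀ l ∈ Set.Icc (0:ℝ) 1, W x y l ∈ C

section Aux
variable {X : Type*} [MetricSpace X] {W : X → X → ℝ → X} {η : ℝ → ℝ → ℝ}

lemma w_zero (hW : IsWHyperbolic W) (x y : X) : W x y 0 = x := by
  have h := hW.1 x y x 0 ⟨le_refl 0, zero_le_one⟩
  simp only [dist_self] at h
  have h2 : dist x (W x y 0) ≤ 0 := by nlinarith [dist_nonneg (x := x) (y := y)]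
  exact (dist_le_zero.mp h2).symm

lemma w_one (hW : IsWHyperbolic W) (x y : X) : W x y 1 = y := by
  have h := hW.1 x y y 1 ⟨zero_le_one, le_refl 1⟩
  simp only [dist_self] at h
  have h2 : dist y (W x y 1) ≤ 0 := by nlinarith [dist_nonneg (x := y) (y := x)]
  exact (dist_le_zero.mp h2).symm

lemma dist_W_left (hW : IsWHyperbolic W) {l : ℝ} (hl : l ∈ Set.Icc (0:ℝ) 1) (x y : X) :
    dist x (W x y l) = l * dist x y := by
  have h := hW.2.1 x y l hl 0 ⟨le_refl 0, zero_le_one⟩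
  rw [w_zero hW, sub_zero, abs_of_nonneg hl.1] at h
  rw [dist_comm, h]

lemma dist_W_right (hW : IsWHyperbolic W) {l : ℝ} (hl : l ∈ Set.Icc (0:ℝ) 1) (x y : X) :
    dist y (W x y l) = (1 - l) * dist x y := by
  have h := hW.2.1 x y l hl 1 ⟨zero_le_one, le_refl 1⟩
  rw [w_one hW] at h
  have : |l - 1| = 1 - l := by rw [abs_sub_comm, abs_of_nonneg (by linarith [hl.2])]
  rw [this] at h
  rw [dist_comm, h]

lemma between_unique (hW : IsWHyperbolic W) (hη : IsMonotoneModulus W η)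
    {x y p q : X} {t : ℝ} (ht : t ∈ Set.Ioo (0:ℝ) 1) (hd : 0 < dist x y)
    (hxp : dist x p = t * dist x y) (hyp : dist y p = (1 - t) * dist x y)
    (hxq : dist x q = t * dist x y) (hyq : dist y q = (1 - t) * dist x y) :
    p = q := by
  by_contra hpq
  have hρ : 0 < dist p q := dist_pos.mpr hpq
  have hr₁ : 0 < t * dist x y := mul_pos ht.1 hd
  have hr₂ : 0 < (1 - t) * dist x y := mul_pos (by linarith [ht.2]) hd
  have hε₁ : dist p q / (t * dist x y) ∈ Set.Ioc (0:ℝ) 2 := by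
    refine ⟨div_pos hρ hr₁, ?_⟩
    rw [div_le_iff₀ hr₁]
    have h3 := dist_triangle p x q
    rw [dist_comm p x] at h3
    nlinarith
  have hε₂ : dist p q / ((1 - t) * dist x y) ∈ Set.Ioc (0:ℝ) 2 := by
    refine ⟨div_pos hρ hr₂, ?_⟩
    rw [div_le_iff₀ hr₂]
    have h3 := dist_triangle p y q
    rw [dist_comm p y] at h3
    nlinarith
  obtain ⟨hpos₁, huc₁⟩ := hη.1 _ hr₁ _ hε₁
  obtain ⟨hpos₂, huc₂⟩ := hη.1 _ hr₂ _ hε₂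
  have h₁ := huc₁ x p q (by rw [dist_comm]; exact hxp.le) (by rw [dist_comm]; exact hxq.le)
      (le_of_eq (div_mul_cancel₀ _ hr₁.ne'))
  have h₂ := huc₂ y p q (by rw [dist_comm]; exact hyp.le) (by rw [dist_comm]; exact hyq.le)
      (le_of_eq (div_mul_cancel₀ _ hr₂.ne'))
  have h5 := dist_triangle x (W p q (1/2)) y
  rw [dist_comm x (W p q (1/2))] at h5
  nlinarith [mul_pos hpos₁.1 hr₁, mul_pos hpos₂.1 hr₂, h₁, h₂, h5]

lemma halfUC (hW : IsWHyperbolic W) (hη : IsMonotoneModulus W η)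
    {r ε t : ℝ} (hr : 0 < r) (hε : ε ∈ Set.Ioc (0:ℝ) 2) (ht0 : 0 < t) (ht2 : t ≤ 1/2)
    {a x y : X} (hx : dist x a ≤ r) (hy : dist y a ≤ r) (hxy : ε * r ≤ dist x y) :
    dist (W x y t) a ≤ (1 - 2 * t * η r ε) * r := by
  have hd : 0 < dist x y := lt_of_lt_of_le (mul_pos hε.1 hr) hxy
  have htI : t ∈ Set.Icc (0:ℝ) 1 := ⟨ht0.le, by linarith⟩
  have h2tI : 2 * t ∈ Set.Icc (0:ℝ) 1 := ⟨by linarith, by linarith⟩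
  have hhalfI : (1/2 : ℝ) ∈ Set.Icc (0:ℝ) 1 := ⟨by norm_num, by norm_num⟩
  set m := W x y (1/2) with hm
  have hxm : dist x m = (1/2) * dist x y := dist_W_left hW hhalfI x y
  have hym : dist y m = (1/2) * dist x y := by
    rw [dist_W_right hW hhalfI x y]; norm_num
  set p := W x m (2 * t) with hp
  have hxp : dist x p = t * dist x y := by
    rw [dist_W_left hW h2tI x m, hxm]; ring
  have hyp_le : dist y p ≤ (1 - t) * dist x y := by
    have h := hW.1 x m y (2 * t) h2tI
    rw [dist_comm y x] at h
    rw [hym] at h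
    calc dist y p ≤ (1 - 2*t) * dist x y + (2*t) * ((1/2) * dist x y) := h
      _ = (1 - t) * dist x y := by ring
  have hyp_ge : (1 - t) * dist x y ≤ dist y p := by
    have h := dist_triangle x p y
    rw [dist_comm p y] at h
    nlinarith
  have hyp : dist y p = (1 - t) * dist x y := le_antisymm hyp_le hyp_ge
  have hxq : dist x (W x y t) = t * dist x y := dist_W_left hW htI x y
  have hyq : dist y (W x y t) = (1 - t) * dist x y := dist_W_right hW htI x y
  have hpq : p = W x y t :=
    between_unique hW hη ⟨ht0, by linarith⟩ hd hxp hyp hxq hyq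
  obtain ⟨hηpos, huc⟩ := hη.1 r hr ε hε
  have hma : dist m a ≤ (1 - η r ε) * r := huc a x y hx hy hxy
  have h := hW.1 x m a (2 * t) h2tI
  rw [← hpq]
  calc dist p a = dist a p := dist_comm p a
    _ ≤ (1 - 2*t) * dist a x + (2*t) * dist a m := h
    _ ≤ (1 - 2*t) * r + (2*t) * ((1 - η r ε) * r) := by
        rw [dist_comm a x, dist_comm a m]
        have h1 : (0:ℝ) ≤ 1 - 2*t := by linarith
        have h2 : (0:ℝ) ≤ 2*t := by linarith
        exact add_le_add (mul_le_mul_of_nonneg_left hx h1)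
          (mul_le_mul_of_nonneg_left hma h2)
    _ = (1 - 2 * t * η r ε) * r := by ring

lemma fullUC (hW : IsWHyperbolic W) (hη : IsMonotoneModulus W η)
    {r ε t : ℝ} (hr : 0 < r) (hε : ε ∈ Set.Ioc (0:ℝ) 2) (ht : t ∈ Set.Ioo (0:ℝ) 1)
    {a x y : X} (hx : dist x a ≤ r) (hy : dist y a ≤ r) (hxy : ε * r ≤ dist x y) :
    dist (W x y t) a ≤ (1 - 2 * t * (1 - t) * η r ε) * r := by
  obtain ⟨hηpos, -⟩ := hη.1 r hr ε hε
  rcases le_or_gt t (1/2) with hc | hc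
  · have h := halfUC hW hη hr hε ht.1 hc hx hy hxy
    have hkey : (1 - 2 * t * (1 - t) * η r ε) * r - (1 - 2 * t * η r ε) * r
        = 2 * t^2 * η r ε * r := by ring
    nlinarith [mul_pos (mul_pos (mul_pos (by norm_num : (0:ℝ) < 2) (pow_pos ht.1 2)) hηpos.1) hr]
  · have htI : t ∈ Set.Icc (0:ℝ) 1 := ⟨ht.1.le, ht.2.le⟩
    rw [hW.2.2.1 x y t htI]
    have hxy' : ε * r ≤ dist y x := by rwa [dist_comm]
    have h := halfUC hW hη hr hε (t := 1 - t) (by have := ht.2; linarith)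
      (by linarith) hy hx hxy'
    have hkey : (1 - 2 * t * (1 - t) * η r ε) * r - (1 - 2 * (1 - t) * η r ε) * r
        = 2 * (1-t)^2 * η r ε * r := by ring
    nlinarith [mul_pos (mul_pos (mul_pos (by norm_num : (0:ℝ) < 2)
      (pow_pos (by have := ht.2; linarith : (0:ℝ) < 1 - t) 2)) hηpos.1) hr]
end Aux


theorem stmt19 {X : Type*} [MetricSpace X]
    (W : X → X → ℝ → X) (hW : IsWHyperbolic W)
    (η : ℝ → ℝ → ℝ) (hη : IsMonotoneModulus W η)
    (b : ℝ) (hb : 0 < b) (l : ℝ) (hl : l ∈ Set.Ioo (0:ℝ) 1)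
    (C : Set X) (hne : C.Nonempty)
    (T : X → X) (hTC : Set.MapsTo T C C)
    (hT : ∀ x ∈ C, ∀ y ∈ C, dist (T x) (T y) ≤ dist (W x (T x) l) (W y (T y) l))
    (x : X) (hx : x ∈ C)
    (happrox : ∀ δ > (0:ℝ), ∃ y ∈ C, dist x y ≤ b ∧ dist y (T y) < δ) :
    (∀ ε ∈ Set.Ioo (0:ℝ) (2 * b),
      ∀ n : ℕ, ⌈(b + 1) / (ε * l * (1 - l) * η (b + 1) (ε / (b + 1)))⌉₊ ≤ n →
        dist (T^[n] x) (T^[n + 1] x) ≤ ε) ∧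
    (∀ ε : ℝ, 2 * b ≤ ε → ∀ n : ℕ, dist (T^[n] x) (T^[n + 1] x) ≤ ε) := by
  obtain ⟨hl0, hl1⟩ := hl
  have hlI : l ∈ Set.Icc (0:ℝ) 1 := ⟨hl0.le, hl1.le⟩
  -- T is nonexpansive on C
  have hne' : ∀ u ∈ C, ∀ v ∈ C, dist (T u) (T v) ≤ dist u v := by
    intro u hu v hv
    have h1 := hT u hu v hv
    have h2 := hW.2.2.2 u v (T u) (T v) l hlI
    nlinarith
  have hmem : ∀ u ∈ C, ∀ k : ℕ, T^[k] u ∈ C := fun u hu k => hTC.iterate k hu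
  have hiter : ∀ k : ℕ, ∀ u ∈ C, ∀ v ∈ C, dist (T^[k] u) (T^[k] v) ≤ dist u v := by
    intro k
    induction k with
    | zero => intro u _ v _; simp
    | succ k ih =>
      intro u hu v hv
      rw [Function.iterate_succ_apply' T k u, Function.iterate_succ_apply' T k v]
      exact le_trans (hne' _ (hmem u hu k) _ (hmem v hv k)) (ih u hu v hv)
  -- Part 2
  have part2 : ∀ ε : ℝ, 2 * b ≤ ε → ∀ n : ℕ, dist (T^[n] x) (T^[n + 1] x) ≤ ε := by
    intro ε hε n
    have h2b : dist (T^[n] x) (T^[n+1] x) ≤ 2 * b := by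
      refine le_of_forall_pos_le_add ?_
      intro δ hδ
      obtain ⟨y, hyC, hxy, hfix⟩ := happrox δ hδ
      have h1 : dist (T^[n] x) (T^[n] y) ≤ b := le_trans (hiter n x hx y hyC) hxy
      have h2 : dist (T^[n] y) (T^[n+1] y) ≤ dist y (T y) := by
        rw [Function.iterate_succ_apply T n y]
        exact hiter n y hyC (T y) (hTC hyC)
      have h3 : dist (T^[n+1] y) (T^[n+1] x) ≤ b := by
        rw [dist_comm]
        exact le_trans (hiter (n+1) x hx y hyC) hxy
      calc dist (T^[n] x) (T^[n+1] x)
          ≤ dist (T^[n] x) (T^[n] y) + dist (T^[n] y) (T^[n+1] y)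
            + dist (T^[n+1] y) (T^[n+1] x) := dist_triangle4 _ _ _ _
        _ ≤ 2*b + δ := by linarith [lt_of_le_of_lt h2 hfix]
    linarith
  refine ⟨?_, part2⟩
  intro ε hε n hn
  by_contra hcon
  push_neg at hcon
  -- monotonicity of displacement sequence
  have hmono1 : ∀ k : ℕ, dist (T^[k+1] x) (T^[k+1+1] x) ≤ dist (T^[k] x) (T^[k+1] x) := by
    intro k
    have h := hne' (T^[k] x) (hmem x hx k) (T^[k+1] x) (hmem x hx (k+1))
    simpa only [← Function.iterate_succ_apply' T k x,
      ← Function.iterate_succ_apply' T (k+1) x] using h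
  have hRanti : Antitone (fun k => dist (T^[k] x) (T^[k+1] x)) :=
    antitone_nat_of_succ_le hmono1
  have hRk : ∀ k, k ≤ n → ε < dist (T^[k] x) (T^[k+1] x) := by
    intro k hk
    have h := hRanti hk
    simp only [] at h
    exact lt_of_lt_of_le hcon h
  have hb1 : (0:ℝ) < b + 1 := by linarith
  have hεhat : ε / (b+1) ∈ Set.Ioc (0:ℝ) 2 := by
    refine ⟨div_pos hε.1 hb1, ?_⟩
    rw [div_le_iff₀ hb1]
    have := hε.2
    linarith
  obtain ⟨hη₀mem, -⟩ := hη.1 (b+1) hb1 _ hεhat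
  set η₀ := η (b+1) (ε/(b+1)) with hη₀def
  set D := ε * l * (1-l) * η₀ with hDdef
  have hDpos : 0 < D := by
    rw [hDdef]
    exact mul_pos (mul_pos (mul_pos hε.1 hl0) (by linarith)) hη₀mem.1
  set Φ := ⌈(b+1)/D⌉₊ with hΦdef
  have hΦpos : 0 < Φ := Nat.ceil_pos.mpr (div_pos (by linarith) hDpos)
  have hΦD : b + 1 ≤ (Φ:ℝ) * D := by
    have h := Nat.le_ceil ((b+1)/D)
    rw [div_le_iff₀ hDpos] at h
    exact h
  have hΦR : (0:ℝ) < (Φ:ℝ) := by exact_mod_cast hΦpos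
  clear_value η₀ D Φ
  set δ := min 1 (1/(4*(Φ:ℝ))) with hδdef
  have hδpos : 0 < δ := lt_min one_pos (by positivity)
  have hδ1 : δ ≤ 1 := min_le_left _ _
  have hδΦ : (Φ:ℝ) * δ ≤ 1/4 := by
    have h := min_le_right 1 (1/(4*(Φ:ℝ)))
    calc (Φ:ℝ) * δ ≤ (Φ:ℝ) * (1/(4*(Φ:ℝ))) := mul_le_mul_of_nonneg_left h hΦR.le
      _ = 1/4 := by field_simp; try ring
  clear_value δ
  obtain ⟨y, hyC, hxyb, hyfix⟩ := happrox δ hδpos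
  have hAmono : ∀ k : ℕ, dist (T^[k+1] x) (T^[k+1] y) ≤ dist (T^[k] x) (T^[k] y) := by
    intro k
    have h := hne' (T^[k] x) (hmem x hx k) (T^[k] y) (hmem y hyC k)
    simpa only [← Function.iterate_succ_apply' T k x,
      ← Function.iterate_succ_apply' T k y] using h
  have hAanti : Antitone (fun k => dist (T^[k] x) (T^[k] y)) :=
    antitone_nat_of_succ_le hAmono
  have hAb : ∀ k : ℕ, dist (T^[k] x) (T^[k] y) ≤ b := by
    intro k
    have h := hAanti (Nat.zero_le k)
    simp only [Function.iterate_zero, id_eq] at h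
    exact le_trans h hxyb
  have hyk : ∀ k : ℕ, dist (T^[k] y) (T^[k+1] y) ≤ δ := by
    intro k
    rw [Function.iterate_succ_apply T k y]
    exact le_trans (hiter k y hyC (T y) (hTC hyC)) hyfix.le
  -- key decrement step
  have key : ∀ k : ℕ, k < Φ →
      dist (T^[k+1] x) (T^[k+1] y) ≤ dist (T^[k] x) (T^[k] y) - D + 3*δ := by
    intro k hk
    have hkn : k ≤ n := le_trans hk.le hn
    have hRkε : ε < dist (T^[k] x) (T^[k+1] x) := hRk k hkn
    have huC := hmem x hx k
    have hwC := hmem y hyC k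
    have hAk0 : (0:ℝ) ≤ dist (T^[k] x) (T^[k] y) := dist_nonneg
    have hr' : 0 < dist (T^[k] x) (T^[k] y) + δ := by linarith
    have hr'b : dist (T^[k] x) (T^[k] y) + δ ≤ b + 1 := by
      have := hAb k
      linarith
    have step1 : dist (T^[k+1] x) (T^[k+1] y)
        ≤ dist (W (T^[k] x) (T^[k+1] x) l) (W (T^[k] y) (T^[k+1] y) l) := by
      have h := hT _ huC _ hwC
      simpa only [← Function.iterate_succ_apply' T k x,
        ← Function.iterate_succ_apply' T k y] using h
    have step2 : dist (T^[k] y) (W (T^[k] y) (T^[k+1] y) l) ≤ δ := by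
      rw [dist_W_left hW hlI]
      calc l * dist (T^[k] y) (T^[k+1] y) ≤ 1 * δ :=
            mul_le_mul hl1.le (hyk k) dist_nonneg zero_le_one
        _ = δ := one_mul δ
    have hvw : dist (T^[k+1] x) (T^[k] y) ≤ dist (T^[k] x) (T^[k] y) + δ := by
      calc dist (T^[k+1] x) (T^[k] y)
          ≤ dist (T^[k+1] x) (T^[k+1] y) + dist (T^[k+1] y) (T^[k] y) := dist_triangle _ _ _
        _ ≤ dist (T^[k] x) (T^[k] y) + δ := by
            rw [dist_comm (T^[k+1] y) (T^[k] y)]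
            linarith [hyk k, hAmono k]
    have huw : dist (T^[k] x) (T^[k] y) ≤ dist (T^[k] x) (T^[k] y) + δ := by linarith
    have hεr : (ε/(b+1)) * (dist (T^[k] x) (T^[k] y) + δ) ≤ dist (T^[k] x) (T^[k+1] x) := by
      have h1 : (ε/(b+1)) * (dist (T^[k] x) (T^[k] y) + δ) ≤ (ε/(b+1)) * (b+1) :=
        mul_le_mul_of_nonneg_left hr'b (le_of_lt (div_pos hε.1 hb1))
      rw [div_mul_cancel₀ _ hb1.ne'] at h1
      exact le_trans h1 hRkε.le
    have h3 := fullUC hW hη hr' hεhat ⟨hl0, hl1⟩ (a := T^[k] y) huw hvw hεr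
    have hmono := hη.2 _ hεhat (dist (T^[k] x) (T^[k] y) + δ) (b+1) hr' hr'b
    obtain ⟨hη'mem, -⟩ := hη.1 (dist (T^[k] x) (T^[k] y) + δ) hr' _ hεhat
    have hεA : ε < 2 * dist (T^[k] x) (T^[k] y) + δ := by
      have h4 := dist_triangle (T^[k] x) (T^[k] y) (T^[k+1] x)
      rw [dist_comm (T^[k] y) (T^[k+1] x)] at h4
      linarith
    have htri := dist_triangle (W (T^[k] x) (T^[k+1] x) l) (T^[k] y)
      (W (T^[k] y) (T^[k+1] y) l)
    set η' := η (dist (T^[k] x) (T^[k] y) + δ) (ε/(b+1)) with hη'def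
    clear_value η'
    have hfin : dist (T^[k+1] x) (T^[k+1] y)
        ≤ (1 - 2*l*(1-l)*η') * (dist (T^[k] x) (T^[k] y) + δ) + δ := by
      linarith
    have h1l : (0:ℝ) < 1 - l := by linarith
    have c1 : 0 < l * (1-l) * η₀ := mul_pos (mul_pos hl0 h1l) hη₀mem.1
    have hmono' : η₀ ≤ η' := by rw [hη₀def]; exact hmono
    have c2 : l*(1-l)*η₀ * (2*(dist (T^[k] x) (T^[k] y) + δ))
        ≤ 2*l*(1-l)*η' * (dist (T^[k] x) (T^[k] y) + δ) := by
      nlinarith [mul_nonneg (mul_nonneg (sub_nonneg.mpr hmono')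
        (le_of_lt (mul_pos hl0 h1l))) hr'.le]
    have c3 : l*(1-l)*η₀ * (ε + δ) ≤ l*(1-l)*η₀ * (2*(dist (T^[k] x) (T^[k] y) + δ)) :=
      mul_le_mul_of_nonneg_left (by linarith) c1.le
    have c4 : D ≤ 2*l*(1-l)*η' * (dist (T^[k] x) (T^[k] y) + δ) := by
      have hD2 : D = l*(1-l)*η₀*ε := by rw [hDdef]; ring
      have c5 : 0 < l*(1-l)*η₀*δ := mul_pos c1 hδpos
      have e6 : l*(1-l)*η₀*(ε+δ) = l*(1-l)*η₀*ε + l*(1-l)*η₀*δ := by ring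
      linarith [c2, c3, c5]
    have efin : (1 - 2*l*(1-l)*η') * (dist (T^[k] x) (T^[k] y) + δ) + δ
        = dist (T^[k] x) (T^[k] y) + 2*δ
          - 2*l*(1-l)*η' * (dist (T^[k] x) (T^[k] y) + δ) := by ring
    linarith [hfin, c4, hδpos]
  -- induction
  have hind : ∀ k : ℕ, k ≤ Φ → dist (T^[k] x) (T^[k] y) ≤ b - k*(D - 3*δ) := by
    intro k
    induction k with
    | zero =>
      intro _
      simp only [Nat.cast_zero, zero_mul, sub_zero, Function.iterate_zero, id_eq]
      exact hxyb
    | succ k ih =>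
      intro hk
      have h1 := key k (by omega)
      have h2 := ih (by omega)
      have hc : ((k+1 : ℕ):ℝ) = (k:ℝ) + 1 := by push_cast; ring
      rw [hc]
      linarith
  have hfinal := hind Φ le_rfl
  have hA0 : (0:ℝ) ≤ dist (T^[Φ] x) (T^[Φ] y) := dist_nonneg
  have e : (Φ:ℝ)*(D-3*δ) = (Φ:ℝ)*D - 3*((Φ:ℝ)*δ) := by ring
  linarith
end
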